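/- Fixed-design setup; assume (α ∈ (0,1) and r ∈ [0,1]) or (α = 0 and r = 1). For every treatment rule δ there exist a0, a1 ∈ [0,1] such that R(δ, (Ber(a0), Ber(a1))) = 1. Consequently, for every treatment rule δ, the supremum over all states (μ0, μ1) of R(δ,(μ0,μ1)) equals 1 and is attained, and every treatment rule is minimax regret. -/

import Mathlib

open MeasureTheory Set

noncomputable section

/-- The set of `α`-quantiles of a Borel probability measure on `[0,1]`
(represented as a measure on `ℝ` giving mass 1 to `[0,1]`). -/
def quantSet (α : ℝ) (μ : Measure ℝ) : Set ℝ :=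
  {q | q ∈ Icc (0 : ℝ) 1 ∧ α ≤ (μ (Icc 0 q)).toReal ∧ 1 - α ≤ (μ (Icc q 1)).toReal}

/-- The `(α, r)`-quantile of `μ`: `r · sup Q(α,μ) + (1 - r) · inf Q(α,μ)`. -/
def quant (α r : ℝ) (μ : Measure ℝ) : ℝ :=
  r * sSup (quantSet α μ) + (1 - r) * sInf (quantSet α μ)

/-- `μ` is a Borel probability measure concentrated on `[0,1]`. -/
def IsProb01 (μ : Measure ℝ) : Prop :=
  IsProbabilityMeasure μ ∧ μ (Icc (0 : ℝ) 1) = 1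

/-- The mixture `p · μ1 + (1 - p) · μ0`. -/
def mix (p : ℝ) (μ0 μ1 : Measure ℝ) : Measure ℝ :=
  ENNReal.ofReal p • μ1 + ENNReal.ofReal (1 - p) • μ0

/-- The "Bernoulli" measure on `[0,1]`: mass `a` at `0` and mass `1 - a` at `1`. -/
def Ber (a : ℝ) : Measure ℝ :=
  ENNReal.ofReal a • Measure.dirac (0 : ℝ) + ENNReal.ofReal (1 - a) • Measure.dirac (1 : ℝ)

/-- Law of the sample in the fixed design: the first `N0` coordinates are i.i.d. from `μ0`,
the last `N1` coordinates are i.i.d. from `μ1`. -/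
def sampleLawFD (N0 N1 : ℕ) (μ0 μ1 : Measure ℝ) : Measure (Fin (N0 + N1) → ℝ) :=
  Measure.pi fun i => if (i : ℕ) < N0 then μ0 else μ1

/-- Regret of a treatment rule in the fixed design. -/
def regretFD (α r : ℝ) (N0 N1 : ℕ) (δ : (Fin (N0 + N1) → ℝ) → ℝ)
    (μ0 μ1 : Measure ℝ) : ℝ :=
  max (quant α r μ0) (quant α r μ1) -
    quant α r (mix (∫ w, δ w ∂(sampleLawFD N0 N1 μ0 μ1)) μ0 μ1)

/-- The set of regret values of the rule `δ` over all states, fixed design. -/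
def regretSetFD (α r : ℝ) (N0 N1 : ℕ) (δ : (Fin (N0 + N1) → ℝ) → ℝ) : Set ℝ :=
  {v | ∃ μ0 μ1 : Measure ℝ, IsProb01 μ0 ∧ IsProb01 μ1 ∧ v = regretFD α r N0 N1 δ μ0 μ1}

/-! ### Auxiliary lemmas -/

open scoped Classical

lemma ber_apply (a : ℝ) {s : Set ℝ} (hs : MeasurableSet s) :
    Ber a s = (if (0:ℝ) ∈ s then ENNReal.ofReal a else 0)
      + (if (1:ℝ) ∈ s then ENNReal.ofReal (1-a) else 0) := by
  by_cases h0 : (0:ℝ) ∈ s <;> by_cases h1 : (1:ℝ) ∈ s <;>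
    simp [Ber, Measure.add_apply, Measure.smul_apply, Measure.dirac_apply' _ hs,
      Set.indicator_apply, smul_eq_mul, h0, h1]

lemma ber_univ (a : ℝ) (ha : a ∈ Icc (0:ℝ) 1) : Ber a univ = 1 := by
  rw [ber_apply a MeasurableSet.univ]
  simp only [mem_univ, if_true]
  rw [← ENNReal.ofReal_add ha.1 (by linarith [ha.2])]
  norm_num

lemma isProb01_ber {a : ℝ} (ha : a ∈ Icc (0:ℝ) 1) : IsProb01 (Ber a) := by
  refine ⟨⟨ber_univ a ha⟩, ?_⟩
  rw [ber_apply a measurableSet_Icc]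
  have h0 : (0:ℝ) ∈ Icc (0:ℝ) 1 := ⟨le_refl 0, zero_le_one⟩
  have h1 : (1:ℝ) ∈ Icc (0:ℝ) 1 := ⟨zero_le_one, le_refl 1⟩
  rw [if_pos h0, if_pos h1, ← ENNReal.ofReal_add ha.1 (by linarith [ha.2])]
  norm_num

lemma ber_toReal_Icc0 {a q : ℝ} (ha : a ∈ Icc (0:ℝ) 1) (hq : q ∈ Icc (0:ℝ) 1) :
    ((Ber a) (Icc 0 q)).toReal = if q = 1 then 1 else a := by
  rw [ber_apply a measurableSet_Icc]
  rcases eq_or_ne q 1 with rfl | hne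
  · have h0 : (0:ℝ) ∈ Icc (0:ℝ) 1 := by norm_num
    have h1 : (1:ℝ) ∈ Icc (0:ℝ) 1 := by norm_num
    simp only [h0, h1, if_true, if_pos rfl]
    rw [← ENNReal.ofReal_add ha.1 (by linarith [ha.2])]
    norm_num
  · have hmem : (0:ℝ) ∈ Icc 0 q := ⟨le_refl 0, hq.1⟩
    have hnmem : ¬ (1:ℝ) ∈ Icc 0 q := by
      simp only [mem_Icc]; push_neg; intro _; exact lt_of_le_of_ne hq.2 hne
    rw [if_pos hmem, if_neg hnmem, if_neg hne, add_zero, ENNReal.toReal_ofReal ha.1]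

lemma ber_toReal_Icc1 {a q : ℝ} (ha : a ∈ Icc (0:ℝ) 1) (hq : q ∈ Icc (0:ℝ) 1) :
    ((Ber a) (Icc q 1)).toReal = if q = 0 then 1 else 1 - a := by
  rw [ber_apply a measurableSet_Icc]
  rcases eq_or_ne q 0 with rfl | hne
  · have h0 : (0:ℝ) ∈ Icc (0:ℝ) 1 := by norm_num
    have h1 : (1:ℝ) ∈ Icc (0:ℝ) 1 := by norm_num
    simp only [h0, h1, if_true, if_pos rfl]
    rw [← ENNReal.ofReal_add ha.1 (by linarith [ha.2])]
    norm_num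
  · have hmem : (1:ℝ) ∈ Icc q 1 := ⟨hq.2, le_refl 1⟩
    have hnmem : ¬ (0:ℝ) ∈ Icc q 1 := by
      simp only [mem_Icc]; push_neg; intro h; exact absurd (le_antisymm h hq.1) hne
    rw [if_pos hmem, if_neg hnmem, if_neg hne, zero_add,
      ENNReal.toReal_ofReal (by linarith [ha.2] : (0:ℝ) ≤ 1 - a)]

lemma quantSet_ber_of_lt {α a : ℝ} (ha : 0 ≤ a) (hlt : a < α) (hα1 : α ≤ 1) :
    quantSet α (Ber a) = {1} := by
  have ha' : a ∈ Icc (0:ℝ) 1 := ⟨ha, le_trans hlt.le hα1⟩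
  ext q
  simp only [quantSet, mem_setOf_eq, mem_singleton_iff]
  constructor
  · rintro ⟨hq, h1, h2⟩
    rw [ber_toReal_Icc0 ha' hq] at h1
    by_contra hne
    rw [if_neg hne] at h1; linarith
  · rintro rfl
    refine ⟨⟨zero_le_one, le_refl 1⟩, ?_, ?_⟩
    · rw [ber_toReal_Icc0 ha' ⟨zero_le_one, le_refl 1⟩]; simp [hα1]
    · rw [ber_toReal_Icc1 ha' ⟨zero_le_one, le_refl 1⟩]
      norm_num; linarith

lemma quantSet_ber_of_gt {α a : ℝ} (hα : 0 ≤ α) (hgt : α < a) (ha1 : a ≤ 1) :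
    quantSet α (Ber a) = {0} := by
  have ha' : a ∈ Icc (0:ℝ) 1 := ⟨le_trans hα hgt.le, ha1⟩
  ext q
  simp only [quantSet, mem_setOf_eq, mem_singleton_iff]
  constructor
  · rintro ⟨hq, h1, h2⟩
    rw [ber_toReal_Icc1 ha' hq] at h2
    by_contra hne
    rw [if_neg hne] at h2; linarith
  · rintro rfl
    refine ⟨⟨le_refl 0, zero_le_one⟩, ?_, ?_⟩
    · rw [ber_toReal_Icc0 ha' ⟨le_refl 0, zero_le_one⟩]
      norm_num; exact hgt.le
    · rw [ber_toReal_Icc1 ha' ⟨le_refl 0, zero_le_one⟩]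
      simp only [if_true]; linarith

lemma quantSet_ber_zero : quantSet 0 (Ber 0) = Icc 0 1 := by
  have ha' : (0:ℝ) ∈ Icc (0:ℝ) 1 := ⟨le_refl 0, zero_le_one⟩
  ext q
  simp only [quantSet, mem_setOf_eq]
  constructor
  · rintro ⟨hq, _, _⟩; exact hq
  · intro hq
    refine ⟨hq, by positivity, ?_⟩
    rw [ber_toReal_Icc1 ha' hq]
    split_ifs <;> norm_num
lemma quant_ber_of_lt {α r a : ℝ} (ha : 0 ≤ a) (hlt : a < α) (hα1 : α ≤ 1) :
    quant α r (Ber a) = 1 := by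
  rw [quant, quantSet_ber_of_lt ha hlt hα1]
  simp [csSup_singleton, csInf_singleton]

lemma quant_ber_of_gt {α r a : ℝ} (hα : 0 ≤ α) (hgt : α < a) (ha1 : a ≤ 1) :
    quant α r (Ber a) = 0 := by
  rw [quant, quantSet_ber_of_gt hα hgt ha1]
  simp [csSup_singleton, csInf_singleton]

lemma quant_ber_zero_zero : quant 0 1 (Ber 0) = 1 := by
  rw [quant, quantSet_ber_zero]
  rw [csSup_Icc zero_le_one]
  norm_num

lemma quant_mem_Icc {α r : ℝ} (hr : r ∈ Icc (0:ℝ) 1) (μ : Measure ℝ) :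
    quant α r μ ∈ Icc (0:ℝ) 1 := by
  have hsub : quantSet α μ ⊆ Icc 0 1 := fun q hq => hq.1
  rcases eq_empty_or_nonempty (quantSet α μ) with he | hne
  · rw [quant, he]
    simp [Real.sSup_empty, Real.sInf_empty]
  · have hbdd : BddAbove (quantSet α μ) := (bddAbove_Icc).mono hsub
    have hbdd' : BddBelow (quantSet α μ) := (bddBelow_Icc).mono hsub
    obtain ⟨x, hx⟩ := hne
    have hs1 : sSup (quantSet α μ) ≤ 1 := csSup_le ⟨x, hx⟩ fun y hy => (hsub hy).2
    have hs0 : 0 ≤ sSup (quantSet α μ) := le_trans (hsub hx).1 (le_csSup hbdd hx)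
    have hi1 : sInf (quantSet α μ) ≤ 1 := le_trans (csInf_le hbdd' hx) (hsub hx).2
    have hi0 : 0 ≤ sInf (quantSet α μ) := le_csInf ⟨x, hx⟩ fun y hy => (hsub hy).1
    constructor
    · rw [quant]; nlinarith [hr.1, hr.2]
    · rw [quant]; nlinarith [hr.1, hr.2]

lemma mix_ber {p a0 a1 : ℝ} (hp : p ∈ Icc (0:ℝ) 1) (h0 : a0 ∈ Icc (0:ℝ) 1)
    (h1 : a1 ∈ Icc (0:ℝ) 1) :
    mix p (Ber a0) (Ber a1) = Ber (p * a1 + (1 - p) * a0) := by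
  refine Measure.ext fun s hs => ?_
  rw [mix, Measure.add_apply, Measure.smul_apply, Measure.smul_apply,
    ber_apply a0 hs, ber_apply a1 hs, ber_apply _ hs]
  have e0 : ENNReal.ofReal p * ENNReal.ofReal a1 + ENNReal.ofReal (1-p) * ENNReal.ofReal a0
      = ENNReal.ofReal (p * a1 + (1-p) * a0) := by
    rw [← ENNReal.ofReal_mul hp.1, ← ENNReal.ofReal_mul (by linarith [hp.2])]
    rw [← ENNReal.ofReal_add (by nlinarith [hp.1, h1.1] : 0 ≤ p * a1)
      (by nlinarith [hp.2, h0.1] : (0:ℝ) ≤ (1-p) * a0)]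
  have e1 : ENNReal.ofReal p * ENNReal.ofReal (1-a1)
      + ENNReal.ofReal (1-p) * ENNReal.ofReal (1-a0)
      = ENNReal.ofReal (1 - (p * a1 + (1-p) * a0)) := by
    rw [← ENNReal.ofReal_mul hp.1, ← ENNReal.ofReal_mul (by linarith [hp.2])]
    rw [← ENNReal.ofReal_add (by nlinarith [hp.1, h1.2] : 0 ≤ p * (1-a1))
      (by nlinarith [hp.2, h0.2] : (0:ℝ) ≤ (1-p) * (1-a0))]
    ring_nf
  by_cases hm0 : (0:ℝ) ∈ s <;> by_cases hm1 : (1:ℝ) ∈ s <;>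
    simp only [hm0, hm1, if_true, if_false, smul_eq_mul, mul_add, mul_zero,
      add_zero, zero_add]
  · rw [← e0, ← e1]; ring
  · rw [← e0]
  · rw [← e1]
/-- Point map from `Bool` to `{0,1} ⊆ ℝ`: `true ↦ 0`, `false ↦ 1`. -/
def ePt : Bool → ℝ := fun b => if b then 0 else 1

/-- Bernoulli-type measure on `Bool`: mass `a` at `true`, `1-a` at `false`. -/
def berB (a : ℝ) : Measure Bool :=
  ENNReal.ofReal a • Measure.dirac true + ENNReal.ofReal (1-a) • Measure.dirac false

lemma ePt_measurable : Measurable ePt := measurable_of_countable _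

lemma map_berB (a : ℝ) : (berB a).map ePt = Ber a := by
  rw [berB, Measure.map_add _ _ ePt_measurable, Measure.map_smul, Measure.map_smul,
    Measure.map_dirac' ePt_measurable, Measure.map_dirac' ePt_measurable]
  rfl

lemma berB_univ (a : ℝ) (ha : a ∈ Icc (0:ℝ) 1) : berB a univ = 1 := by
  rw [berB, Measure.add_apply, Measure.smul_apply, Measure.smul_apply]
  simp [← ENNReal.ofReal_add ha.1 (by linarith [ha.2] : (0:ℝ) ≤ 1 - a)]

lemma berB_singleton (a : ℝ) (b : Bool) :
    berB a {b} = if b then ENNReal.ofReal a else ENNReal.ofReal (1-a) := by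
  rw [berB, Measure.add_apply, Measure.smul_apply, Measure.smul_apply,
    Measure.dirac_apply' _ (measurableSet_singleton b),
    Measure.dirac_apply' _ (measurableSet_singleton b)]
  cases b <;> simp

instance berB_finite (a : ℝ) : IsFiniteMeasure (berB a) := by
  constructor
  rw [berB, Measure.add_apply, Measure.smul_apply, Measure.smul_apply]
  simp only [smul_eq_mul]
  exact ENNReal.add_lt_top.mpr ⟨ENNReal.mul_lt_top ENNReal.ofReal_lt_top (by simp),
    ENNReal.mul_lt_top ENNReal.ofReal_lt_top (by simp)⟩

lemma sample_eq (N0 N1 : ℕ) {a0 a1 : ℝ} (h0 : a0 ∈ Icc (0:ℝ) 1) (h1 : a1 ∈ Icc (0:ℝ) 1) :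
    sampleLawFD N0 N1 (Ber a0) (Ber a1)
      = Measure.map (fun (x : Fin (N0+N1) → Bool) (i : Fin (N0+N1)) => ePt (x i))
        (Measure.pi fun i : Fin (N0+N1) => berB (if (i:ℕ) < N0 then a0 else a1)) := by
  haveI h0p : IsProbabilityMeasure (Ber a0) := (isProb01_ber h0).1
  haveI h1p : IsProbabilityMeasure (Ber a1) := (isProb01_ber h1).1
  haveI : ∀ i : Fin (N0+N1), SigmaFinite ((fun i : Fin (N0+N1) =>
      if (i:ℕ) < N0 then Ber a0 else Ber a1) i) := by
    intro i; by_cases h : (i:ℕ) < N0 <;> simp only [h, if_true, if_false] <;> infer_instance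
  have hmp : ∀ i : Fin (N0+N1), MeasurePreserving ePt
      (berB (if (i:ℕ) < N0 then a0 else a1))
      ((fun i : Fin (N0+N1) => if (i:ℕ) < N0 then Ber a0 else Ber a1) i) := by
    intro i
    by_cases h : (i:ℕ) < N0 <;> simp only [h, if_true, if_false] <;>
      exact ⟨ePt_measurable, map_berB _⟩
  have := (measurePreserving_pi _ _ hmp).map_eq
  rw [sampleLawFD, ← this]

lemma pi_berB_singleton (N0 N1 : ℕ) (a0 a1 : ℝ) (x : Fin (N0+N1) → Bool) :
    (Measure.pi fun i : Fin (N0+N1) => berB (if (i:ℕ) < N0 then a0 else a1)) {x}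
      = ∏ i : Fin (N0+N1), berB (if (i:ℕ) < N0 then a0 else a1) {x i} := by
  rw [← Set.univ_pi_singleton x, Measure.pi_pi]
/-- The polynomial giving the expected treatment probability under Bernoulli states. -/
def FF (N0 N1 : ℕ) (δ : (Fin (N0+N1) → ℝ) → ℝ) (a0 a1 : ℝ) : ℝ :=
  ∑ x : Fin (N0+N1) → Bool,
    (∏ i : Fin (N0+N1), (if x i then (if (i:ℕ) < N0 then a0 else a1)
      else 1 - (if (i:ℕ) < N0 then a0 else a1))) * δ (fun i => ePt (x i))

lemma FF_cont (N0 N1 : ℕ) (δ : (Fin (N0+N1) → ℝ) → ℝ) :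
    Continuous (fun q : ℝ × ℝ => FF N0 N1 δ q.1 q.2) := by
  unfold FF
  refine continuous_finset_sum _ fun x _ => Continuous.mul ?_ continuous_const
  refine continuous_finset_prod _ fun i _ => ?_
  by_cases h : x i = true <;> by_cases h2 : (i:ℕ) < N0 <;>
    simp [h, h2] <;> fun_prop

lemma P_eq (N0 N1 : ℕ) (δ : (Fin (N0+N1) → ℝ) → ℝ) (hδm : Measurable δ)
    {a0 a1 : ℝ} (h0 : a0 ∈ Icc (0:ℝ) 1) (h1 : a1 ∈ Icc (0:ℝ) 1) :
    ∫ w, δ w ∂(sampleLawFD N0 N1 (Ber a0) (Ber a1)) = FF N0 N1 δ a0 a1 := by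
  rw [sample_eq N0 N1 h0 h1]
  have hφ : Measurable (fun (x : Fin (N0+N1) → Bool) (i : Fin (N0+N1)) => ePt (x i)) :=
    measurable_pi_lambda _ fun i => ePt_measurable.comp (measurable_pi_apply i)
  rw [integral_map hφ.aemeasurable hδm.aestronglyMeasurable]
  rw [integral_fintype Integrable.of_finite]
  unfold FF
  refine Finset.sum_congr rfl fun x _ => ?_
  rw [measureReal_def, pi_berB_singleton N0 N1 a0 a1 x, ENNReal.toReal_prod, smul_eq_mul]
  congr 1
  refine Finset.prod_congr rfl fun i _ => ?_
  rw [berB_singleton]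
  by_cases h : x i = true <;> by_cases h2 : (i:ℕ) < N0 <;>
    simp only [h, h2, if_true, if_false] <;>
    [exact ENNReal.toReal_ofReal h0.1;
     exact ENNReal.toReal_ofReal h1.1;
     exact ENNReal.toReal_ofReal (by linarith [h0.2] : (0:ℝ) ≤ 1 - a0);
     exact ENNReal.toReal_ofReal (by linarith [h1.2] : (0:ℝ) ≤ 1 - a1)]
lemma sampleLaw_prob (N0 N1 : ℕ) {a0 a1 : ℝ} (h0 : a0 ∈ Icc (0:ℝ) 1)
    (h1 : a1 ∈ Icc (0:ℝ) 1) :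
    IsProbabilityMeasure (sampleLawFD N0 N1 (Ber a0) (Ber a1)) := by
  haveI h0p : IsProbabilityMeasure (Ber a0) := (isProb01_ber h0).1
  haveI h1p : IsProbabilityMeasure (Ber a1) := (isProb01_ber h1).1
  haveI : ∀ i : Fin (N0+N1), IsProbabilityMeasure ((fun i : Fin (N0+N1) =>
      if (i:ℕ) < N0 then Ber a0 else Ber a1) i) := by
    intro i; by_cases h : (i:ℕ) < N0 <;> simp only [h, if_true, if_false] <;> infer_instance
  rw [sampleLawFD]; infer_instance

lemma P_mem_Icc (N0 N1 : ℕ) (δ : (Fin (N0+N1) → ℝ) → ℝ) (hδm : Measurable δ)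
    (hδ : ∀ w, δ w ∈ Icc (0 : ℝ) 1) {a0 a1 : ℝ} (h0 : a0 ∈ Icc (0:ℝ) 1)
    (h1 : a1 ∈ Icc (0:ℝ) 1) :
    (∫ w, δ w ∂(sampleLawFD N0 N1 (Ber a0) (Ber a1))) ∈ Icc (0:ℝ) 1 := by
  haveI := sampleLaw_prob N0 N1 h0 h1
  have hint : Integrable δ (sampleLawFD N0 N1 (Ber a0) (Ber a1)) := by
    refine Integrable.mono' (integrable_const 1) hδm.aestronglyMeasurable ?_
    filter_upwards with w
    rw [Real.norm_eq_abs, abs_le]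
    exact ⟨by linarith [(hδ w).1], (hδ w).2⟩
  constructor
  · exact integral_nonneg fun w => (hδ w).1
  · calc ∫ w, δ w ∂(sampleLawFD N0 N1 (Ber a0) (Ber a1))
        ≤ ∫ _, (1:ℝ) ∂(sampleLawFD N0 N1 (Ber a0) (Ber a1)) :=
          integral_mono hint (integrable_const 1) fun w => (hδ w).2
      _ = 1 := by simp

/-- If some arm has quantile value 1 and the mixture parameter strictly exceeds `α`,
the regret is 1. -/
lemma regret_one {α r : ℝ} (N0 N1 : ℕ) (δ : (Fin (N0+N1) → ℝ) → ℝ)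
    (hδm : Measurable δ) (hδ : ∀ w, δ w ∈ Icc (0 : ℝ) 1)
    (hr : r ∈ Icc (0:ℝ) 1) (hα0 : 0 ≤ α) {a0 a1 : ℝ}
    (h0 : a0 ∈ Icc (0:ℝ) 1) (h1 : a1 ∈ Icc (0:ℝ) 1)
    (hone : quant α r (Ber a0) = 1 ∨ quant α r (Ber a1) = 1)
    (hb : α < (∫ w, δ w ∂(sampleLawFD N0 N1 (Ber a0) (Ber a1))) * a1
      + (1 - (∫ w, δ w ∂(sampleLawFD N0 N1 (Ber a0) (Ber a1)))) * a0) :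
    regretFD α r N0 N1 δ (Ber a0) (Ber a1) = 1 := by
  set p := ∫ w, δ w ∂(sampleLawFD N0 N1 (Ber a0) (Ber a1)) with hp
  have hpI : p ∈ Icc (0:ℝ) 1 := P_mem_Icc N0 N1 δ hδm hδ h0 h1
  have hbI : p * a1 + (1-p) * a0 ≤ 1 := by nlinarith [hpI.1, hpI.2, h0.2, h1.2]
  rw [regretFD, ← hp, mix_ber hpI h0 h1, quant_ber_of_gt hα0 hb hbI, sub_zero]
  rcases hone with h | h
  · rw [h]; exact max_eq_left (quant_mem_Icc hr (Ber a1)).2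
  · rw [h]; exact max_eq_right (quant_mem_Icc hr (Ber a0)).2
/-- The final contradiction step: a continuous function of two variables cannot be `0` on
`{α} × (α,1]` and `1` on `(α,1] × {α}` if it is, in the limit, both `0` and `1` at `(α,α)`. -/
lemma stepC {F : ℝ → ℝ → ℝ} (hFc : Continuous fun q : ℝ × ℝ => F q.1 q.2) {α : ℝ}
    (hα1 : α < 1) (hA : ∀ s ∈ Ioc α 1, F α s = 0) (hB : ∀ s ∈ Ioc α 1, F s α = 1) :
    False := by
  have h0 : F α α = 0 := by
    have hc : Continuous fun s => F α s := hFc.comp (continuous_const.prodMk continuous_id)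
    have hclosed : IsClosed {s : ℝ | F α s = 0} := isClosed_eq hc continuous_const
    have hsub : Icc α 1 ⊆ {s | F α s = 0} := by
      rw [← closure_Ioc (ne_of_lt hα1)]
      exact hclosed.closure_subset_iff.mpr hA
    exact hsub ⟨le_refl α, hα1.le⟩
  have h1 : F α α = 1 := by
    have hc : Continuous fun s => F s α := hFc.comp (continuous_id.prodMk continuous_const)
    have hclosed : IsClosed {s : ℝ | F s α = 1} := isClosed_eq hc continuous_const
    have hsub : Icc α 1 ⊆ {s | F s α = 1} := by
      rw [← closure_Ioc (ne_of_lt hα1)]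
      exact hclosed.closure_subset_iff.mpr hB
    exact hsub ⟨le_refl α, hα1.le⟩
  linarith

lemma dichotomy {α r : ℝ}
    (h : (α ∈ Ioo (0 : ℝ) 1 ∧ r ∈ Icc (0 : ℝ) 1) ∨ (α = 0 ∧ r = 1))
    (F : ℝ → ℝ → ℝ) (hFc : Continuous (fun q : ℝ × ℝ => F q.1 q.2))
    (hFI : ∀ a0 ∈ Icc (0:ℝ) 1, ∀ a1 ∈ Icc (0:ℝ) 1, F a0 a1 ∈ Icc (0:ℝ) 1)
    (key : ∀ a0 ∈ Icc (0:ℝ) 1, ∀ a1 ∈ Icc (0:ℝ) 1,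
      (quant α r (Ber a0) = 1 ∨ quant α r (Ber a1) = 1) →
      F a0 a1 * a1 + (1 - F a0 a1) * a0 ≤ α) : False := by
  have hα0 : 0 ≤ α := by
    rcases h with ⟨hα, _⟩ | ⟨hα, _⟩
    · exact hα.1.le
    · rw [hα]
  have hα1 : α < 1 := by
    rcases h with ⟨hα, _⟩ | ⟨hα, _⟩
    · exact hα.2
    · rw [hα]; exact zero_lt_one
  have hαI : α ∈ Icc (0:ℝ) 1 := ⟨hα0, hα1.le⟩
  rcases h with ⟨hα, -⟩ | ⟨hα', hrr⟩
  · -- case α ∈ (0,1)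
    have hA : ∀ s ∈ Ioc α 1, F α s = 0 := by
      intro s hs
      have hsI : s ∈ Icc (0:ℝ) 1 := ⟨le_trans hα0 hs.1.le, hs.2⟩
      have hle : F α s * s + (1 - F α s) * α ≤ α := by
        have hcont : Continuous fun t => F t s * s + (1 - F t s) * t := by
          have hFt : Continuous fun t : ℝ => F t s :=
            hFc.comp (continuous_id.prodMk continuous_const)
          fun_prop
        have hclosed : IsClosed {t : ℝ | F t s * s + (1 - F t s) * t ≤ α} :=
          isClosed_le hcont continuous_const
        have hsub : Ico (0:ℝ) α ⊆ {t : ℝ | F t s * s + (1 - F t s) * t ≤ α} := by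
          intro t ht
          exact key t ⟨ht.1, le_trans ht.2.le hα1.le⟩ s hsI
            (Or.inl (quant_ber_of_lt ht.1 ht.2 hα1.le))
        have hsub2 : Icc (0:ℝ) α ⊆ {t : ℝ | F t s * s + (1 - F t s) * t ≤ α} := by
          rw [← closure_Ico (ne_of_lt hα.1)]
          exact hclosed.closure_subset_iff.mpr hsub
        exact hsub2 ⟨hα0, le_refl α⟩
      have hFI' := hFI α hαI s hsI
      have hpos : 0 < s - α := by linarith [hs.1]
      nlinarith [hFI'.1]
    have hB : ∀ s ∈ Ioc α 1, F s α = 1 := by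
      intro s hs
      have hsI : s ∈ Icc (0:ℝ) 1 := ⟨le_trans hα0 hs.1.le, hs.2⟩
      have hle : F s α * α + (1 - F s α) * s ≤ α := by
        have hcont : Continuous fun t => F s t * t + (1 - F s t) * s := by
          have hFt : Continuous fun t : ℝ => F s t :=
            hFc.comp (continuous_const.prodMk continuous_id)
          fun_prop
        have hclosed : IsClosed {t : ℝ | F s t * t + (1 - F s t) * s ≤ α} :=
          isClosed_le hcont continuous_const
        have hsub : Ico (0:ℝ) α ⊆ {t : ℝ | F s t * t + (1 - F s t) * s ≤ α} := by
          intro t ht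
          exact key s hsI t ⟨ht.1, le_trans ht.2.le hα1.le⟩
            (Or.inr (quant_ber_of_lt ht.1 ht.2 hα1.le))
        have hsub2 : Icc (0:ℝ) α ⊆ {t : ℝ | F s t * t + (1 - F s t) * s ≤ α} := by
          rw [← closure_Ico (ne_of_lt hα.1)]
          exact hclosed.closure_subset_iff.mpr hsub
        exact hsub2 ⟨hα0, le_refl α⟩
      have hFI' := hFI s hsI α hαI
      have hpos : 0 < s - α := by linarith [hs.1]
      nlinarith [hFI'.2]
    exact stepC hFc hα1 hA hB
  · -- case α = 0, r = 1
    subst hα'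
    have h0I : (0:ℝ) ∈ Icc (0:ℝ) 1 := ⟨le_refl 0, zero_le_one⟩
    have hq1 : quant 0 r (Ber 0) = 1 := by rw [hrr]; exact quant_ber_zero_zero
    have hA : ∀ s ∈ Ioc (0:ℝ) 1, F 0 s = 0 := by
      intro s hs
      have hsI : s ∈ Icc (0:ℝ) 1 := ⟨hs.1.le, hs.2⟩
      have hle := key 0 h0I s hsI (Or.inl hq1)
      have hFI' := hFI 0 h0I s hsI
      nlinarith [hFI'.1, hs.1]
    have hB : ∀ s ∈ Ioc (0:ℝ) 1, F s 0 = 1 := by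
      intro s hs
      have hsI : s ∈ Icc (0:ℝ) 1 := ⟨hs.1.le, hs.2⟩
      have hle := key s hsI 0 h0I (Or.inr hq1)
      have hFI' := hFI s hsI 0 h0I
      nlinarith [hFI'.2, hs.1]
    exact stepC hFc hα1 hA hB

lemma exists_regret_one {α r : ℝ}
    (h : (α ∈ Ioo (0 : ℝ) 1 ∧ r ∈ Icc (0 : ℝ) 1) ∨ (α = 0 ∧ r = 1))
    (N0 N1 : ℕ) (δ : (Fin (N0 + N1) → ℝ) → ℝ) (hδm : Measurable δ)
    (hδ : ∀ w, δ w ∈ Icc (0 : ℝ) 1) :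
    ∃ a0 ∈ Icc (0 : ℝ) 1, ∃ a1 ∈ Icc (0 : ℝ) 1,
      regretFD α r N0 N1 δ (Ber a0) (Ber a1) = 1 := by
  have hr : r ∈ Icc (0:ℝ) 1 := by
    rcases h with ⟨_, hr⟩ | ⟨_, hr⟩
    · exact hr
    · rw [hr]; exact ⟨zero_le_one, le_refl 1⟩
  have hα0 : 0 ≤ α := by
    rcases h with ⟨hα, _⟩ | ⟨hα, _⟩
    · exact hα.1.le
    · rw [hα]
  by_contra hcon
  push_neg at hcon
  refine dichotomy h (FF N0 N1 δ) (FF_cont N0 N1 δ) ?_ ?_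
  · intro a0 h0 a1 h1
    rw [← P_eq N0 N1 δ hδm h0 h1]
    exact P_mem_Icc N0 N1 δ hδm hδ h0 h1
  · intro a0 h0 a1 h1 hone
    by_contra hgt
    push_neg at hgt
    refine hcon a0 h0 a1 h1 (regret_one N0 N1 δ hδm hδ hr hα0 h0 h1 hone ?_)
    rw [P_eq N0 N1 δ hδm h0 h1]
    exact hgt
lemma regret_le_one {α r : ℝ} (hr : r ∈ Icc (0:ℝ) 1) (N0 N1 : ℕ)
    (δ : (Fin (N0 + N1) → ℝ) → ℝ) (μ0 μ1 : Measure ℝ) :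
    regretFD α r N0 N1 δ μ0 μ1 ≤ 1 := by
  rw [regretFD]
  have h0 := quant_mem_Icc (α := α) hr μ0
  have h1 := quant_mem_Icc (α := α) hr μ1
  have h2 := quant_mem_Icc (α := α) hr (mix (∫ w, δ w ∂(sampleLawFD N0 N1 μ0 μ1)) μ0 μ1)
  have : max (quant α r μ0) (quant α r μ1) ≤ 1 := max_le h0.2 h1.2
  linarith [h2.1]

lemma isGreatest_regretSet {α r : ℝ}
    (h : (α ∈ Ioo (0 : ℝ) 1 ∧ r ∈ Icc (0 : ℝ) 1) ∨ (α = 0 ∧ r = 1))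
    (N0 N1 : ℕ) (δ : (Fin (N0 + N1) → ℝ) → ℝ) (hδm : Measurable δ)
    (hδ : ∀ w, δ w ∈ Icc (0 : ℝ) 1) :
    IsGreatest (regretSetFD α r N0 N1 δ) 1 := by
  have hr : r ∈ Icc (0:ℝ) 1 := by
    rcases h with ⟨_, hr⟩ | ⟨_, hr⟩
    · exact hr
    · rw [hr]; exact ⟨zero_le_one, le_refl 1⟩
  obtain ⟨a0, h0, a1, h1, heq⟩ := exists_regret_one h N0 N1 δ hδm hδ
  constructor
  · exact ⟨Ber a0, Ber a1, isProb01_ber h0, isProb01_ber h1, heq.symm⟩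
  · rintro v ⟨μ0, μ1, -, -, rfl⟩
    exact regret_le_one hr N0 N1 δ μ0 μ1

/-- fixed design, `(α ∈ (0,1), r ∈ [0,1])` or `(α = 0, r = 1)`: for every rule
there is a Bernoulli state with regret 1; hence the supremum of regret over states equals 1,
is attained, and every rule is minimax regret. -/
theorem stmt4 (α r : ℝ)
    (h : (α ∈ Ioo (0 : ℝ) 1 ∧ r ∈ Icc (0 : ℝ) 1) ∨ (α = 0 ∧ r = 1))
    (N0 N1 : ℕ) (δ : (Fin (N0 + N1) → ℝ) → ℝ) (hδm : Measurable δ)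
    (hδ : ∀ w, δ w ∈ Icc (0 : ℝ) 1) :
    (∃ a0 ∈ Icc (0 : ℝ) 1, ∃ a1 ∈ Icc (0 : ℝ) 1,
        regretFD α r N0 N1 δ (Ber a0) (Ber a1) = 1) ∧
    IsGreatest (regretSetFD α r N0 N1 δ) 1 ∧
    (∀ δ' : (Fin (N0 + N1) → ℝ) → ℝ, Measurable δ' → (∀ w, δ' w ∈ Icc (0 : ℝ) 1) →
      sSup (regretSetFD α r N0 N1 δ) ≤ sSup (regretSetFD α r N0 N1 δ')) := by
  
  refine ⟨exists_regret_one h N0 N1 δ hδm hδ, isGreatest_regretSet h N0 N1 δ hδm hδ, ?_⟩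
  intro δ' hδ'm hδ'
  rw [(isGreatest_regretSet h N0 N1 δ hδm hδ).csSup_eq,
    (isGreatest_regretSet h N0 N1 δ' hδ'm hδ').csSup_eq]
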